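/- arXiv:1603.07398 — 2 statements merged into one kernel-verified Lean document; each statement's English description precedes it below -/
import Mathlib

section
/- Let D be a finite projective plane of order q ≥ 2, i.e., a 2-(q²+q+1, q+1, 1) design. Then γ(D) = 2q. -/
open Finset

variable {α : Type*} [DecidableEq α]

/-- `IsDesign X Bl v k lam` : `(X, Bl)` is a 2-(v,k,λ) design: `X` has `v` points,
every block is a `k`-subset of `X`, `v ≥ k ≥ 2`, `λ ≥ 1`, and any two distinct
points lie in exactly `λ` common blocks. -/
structure IsDesign (X : Finset α) (Bl : Finset (Finset α)) (v k lam : ℕ) : Prop where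
  two_le_k : 2 ≤ k
  k_le_v : k ≤ v
  one_le_lam : 1 ≤ lam
  card_points : X.card = v
  block_subset : ∀ b ∈ Bl, b ⊆ X
  block_card : ∀ b ∈ Bl, b.card = k
  pair_count : ∀ x ∈ X, ∀ y ∈ X, x ≠ y →
    (Bl.filter (fun b => x ∈ b ∧ y ∈ b)).card = lam

/-- `IsDomSet X Bl P L` : the vertex set of the incidence graph of `(X, Bl)`
consisting of the points `P` and the blocks `L` is a dominating set: every point
of `X` not in `P` lies in some block of `L`, and every block of `Bl` not in `L`
contains some point of `P`. -/
def IsDomSet (X : Finset α) (Bl : Finset (Finset α))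
    (P : Finset α) (L : Finset (Finset α)) : Prop :=
  P ⊆ X ∧ L ⊆ Bl ∧
    (∀ x ∈ X, x ∉ P → ∃ b ∈ L, x ∈ b) ∧
    (∀ b ∈ Bl, b ∉ L → ∃ x ∈ P, x ∈ b)

/-- The domination number of the incidence graph of `(X, Bl)`: the minimum total
cardinality `|P| + |L|` of a dominating set (points `P`, blocks `L`). -/
noncomputable def gamma (X : Finset α) (Bl : Finset (Finset α)) : ℕ :=
  sInf {n | ∃ P L, IsDomSet X Bl P L ∧ P.card + L.card = n}

section Aux

variable {X : Finset α} {Bl : Finset (Finset α)} {q : ℕ}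

/-- Two distinct points lie on a unique block. -/
lemma unique_block (hD : IsDesign X Bl (q ^ 2 + q + 1) (q + 1) 1)
    {x y : α} (hx : x ∈ X) (hy : y ∈ X) (hxy : x ≠ y)
    {b c : Finset α} (hb : b ∈ Bl) (hc : c ∈ Bl)
    (hxb : x ∈ b) (hyb : y ∈ b) (hxc : x ∈ c) (hyc : y ∈ c) : b = c := by
  have h := hD.pair_count x hx y hy hxy
  rw [Finset.card_eq_one] at h
  obtain ⟨a, ha⟩ := h
  have h1 : b ∈ Bl.filter (fun b => x ∈ b ∧ y ∈ b) := Finset.mem_filter.2 ⟨hb, hxb, hyb⟩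
  have h2 : c ∈ Bl.filter (fun b => x ∈ b ∧ y ∈ b) := Finset.mem_filter.2 ⟨hc, hxc, hyc⟩
  rw [ha, Finset.mem_singleton] at h1 h2
  rw [h1, h2]

/-- Two distinct points lie on some block. -/
lemma exists_block (hD : IsDesign X Bl (q ^ 2 + q + 1) (q + 1) 1)
    {x y : α} (hx : x ∈ X) (hy : y ∈ X) (hxy : x ≠ y) :
    ∃ b ∈ Bl, x ∈ b ∧ y ∈ b := by
  have h := hD.pair_count x hx y hy hxy
  have hne : (Bl.filter (fun b => x ∈ b ∧ y ∈ b)).Nonempty := by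
    rw [← Finset.card_pos, h]; norm_num
  obtain ⟨b, hb⟩ := hne
  rw [Finset.mem_filter] at hb
  exact ⟨b, hb.1, hb.2⟩

/-- Replication number: every point lies on exactly `q + 1` blocks. -/
lemma repl (hD : IsDesign X Bl (q ^ 2 + q + 1) (q + 1) 1) (hq : 1 ≤ q)
    {p : α} (hp : p ∈ X) : (Bl.filter (fun b => p ∈ b)).card = q + 1 := by
  set F := Bl.filter (fun b => p ∈ b) with hF
  have key : ∑ b ∈ F, (b.erase p).card = ∑ y ∈ X.erase p, (F.filter (fun b => y ∈ b)).card := by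
    have h1 : ∀ b ∈ F, (b.erase p).card = ((X.erase p).filter (fun y => y ∈ b)).card := by
      intro b hb
      rw [hF, Finset.mem_filter] at hb
      congr 1
      ext y
      simp only [Finset.mem_erase, Finset.mem_filter]
      exact ⟨fun h => ⟨⟨h.1, hD.block_subset b hb.1 h.2⟩, h.2⟩, fun h => ⟨h.1.1, h.2⟩⟩
    rw [Finset.sum_congr rfl h1]
    simp only [Finset.card_filter]
    exact Finset.sum_comm
  have hL : ∑ b ∈ F, (b.erase p).card = F.card * q := by
    rw [Finset.sum_congr rfl (fun b hb => ?_), Finset.sum_const, smul_eq_mul]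
    rw [hF, Finset.mem_filter] at hb
    rw [Finset.card_erase_of_mem hb.2, hD.block_card b hb.1]
    simp
  have hR : ∑ y ∈ X.erase p, (F.filter (fun b => y ∈ b)).card = q ^ 2 + q := by
    have h2 : ∀ y ∈ X.erase p, (F.filter (fun b => y ∈ b)).card = 1 := by
      intro y hy
      rw [Finset.mem_erase] at hy
      rw [hF, Finset.filter_filter]
      exact hD.pair_count p hp y hy.2 (fun h => hy.1 h.symm)
    rw [Finset.sum_congr rfl h2, Finset.sum_const, smul_eq_mul, mul_one,
      Finset.card_erase_of_mem hp, hD.card_points]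
    simp
  have : F.card * q = (q + 1) * q := by
    rw [← hL, key, hR]; ring
  exact Nat.eq_of_mul_eq_mul_right (by omega) this

/-- The number of blocks. -/
lemma card_blocks (hD : IsDesign X Bl (q ^ 2 + q + 1) (q + 1) 1) (hq : 1 ≤ q) :
    Bl.card = q ^ 2 + q + 1 := by
  have key : ∑ b ∈ Bl, b.card = ∑ p ∈ X, (Bl.filter (fun b => p ∈ b)).card := by
    have h1 : ∀ b ∈ Bl, b.card = (X.filter (fun y => y ∈ b)).card := by
      intro b hb
      congr 1
      ext y
      simp only [Finset.mem_filter]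
      exact ⟨fun h => ⟨hD.block_subset b hb h, h⟩, fun h => h.2⟩
    rw [Finset.sum_congr rfl h1]
    simp only [Finset.card_filter]
    exact Finset.sum_comm
  have hL : ∑ b ∈ Bl, b.card = Bl.card * (q + 1) := by
    rw [Finset.sum_congr rfl (fun b hb => hD.block_card b hb), Finset.sum_const, smul_eq_mul]
  have hR : ∑ p ∈ X, (Bl.filter (fun b => p ∈ b)).card = (q ^ 2 + q + 1) * (q + 1) := by
    rw [Finset.sum_congr rfl (fun p hp => repl hD hq hp), Finset.sum_const, smul_eq_mul,
      hD.card_points]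
  have : Bl.card * (q + 1) = (q ^ 2 + q + 1) * (q + 1) := by rw [← hL, key, hR]
  exact Nat.eq_of_mul_eq_mul_right (by omega) this

/-- Any two distinct blocks meet. -/
lemma lines_meet (hD : IsDesign X Bl (q ^ 2 + q + 1) (q + 1) 1) (hq : 1 ≤ q)
    {b c : Finset α} (hb : b ∈ Bl) (hc : c ∈ Bl) (hbc : b ≠ c) :
    ∃ x, x ∈ b ∧ x ∈ c := by
  have hsub : ¬ b ⊆ c := fun h => hbc (Finset.eq_of_subset_of_card_le h
    (by rw [hD.block_card b hb, hD.block_card c hc]))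
  obtain ⟨p, hpb, hpc⟩ := Finset.not_subset.mp hsub
  by_contra hcon
  push_neg at hcon
  set F := Bl.filter (fun d => p ∈ d) with hF
  have hpX : p ∈ X := hD.block_subset b hb hpb
  have key : ∑ d ∈ F, (c.filter (fun x => x ∈ d)).card = q + 1 := by
    have h1 : ∑ d ∈ F, (c.filter (fun x => x ∈ d)).card
        = ∑ x ∈ c, (F.filter (fun d => x ∈ d)).card := by
      simp only [Finset.card_filter]
      exact Finset.sum_comm
    have h2 : ∀ x ∈ c, (F.filter (fun d => x ∈ d)).card = 1 := by
      intro x hx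
      rw [hF, Finset.filter_filter]
      exact hD.pair_count p hpX x (hD.block_subset c hc hx) (fun h => hpc (h ▸ hx))
    rw [h1, Finset.sum_congr rfl h2, Finset.sum_const, smul_eq_mul, mul_one,
      hD.block_card c hc]
  have hbF : b ∈ F := Finset.mem_filter.2 ⟨hb, hpb⟩
  have hsplit : (c.filter (fun x => x ∈ b)).card
      + ∑ d ∈ F.erase b, (c.filter (fun x => x ∈ d)).card
      = ∑ d ∈ F, (c.filter (fun x => x ∈ d)).card :=
    Finset.add_sum_erase F (fun d => (c.filter (fun x => x ∈ d)).card) hbF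
  have hzero : (c.filter (fun x => x ∈ b)).card = 0 := by
    rw [Finset.card_eq_zero, Finset.filter_eq_empty_iff]
    exact fun {x} hx hxb => hcon x hxb hx
  have hbound : ∑ d ∈ F.erase b, (c.filter (fun x => x ∈ d)).card ≤ (F.erase b).card := by
    have h1 : ∀ d ∈ F.erase b, (c.filter (fun x => x ∈ d)).card ≤ 1 := by
      intro d hd
      rw [Finset.card_le_one]
      intro x hx y hy
      by_contra hxy
      rw [Finset.mem_filter] at hx hy
      have hdF := Finset.mem_of_mem_erase hd
      rw [hF, Finset.mem_filter] at hdF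
      have hcd := unique_block hD (hD.block_subset c hc hx.1) (hD.block_subset c hc hy.1)
        hxy hc hdF.1 hx.1 hy.1 hx.2 hy.2
      exact hpc (hcd ▸ hdF.2)
    calc ∑ d ∈ F.erase b, (c.filter (fun x => x ∈ d)).card ≤ (F.erase b).card • 1 :=
          Finset.sum_le_card_nsmul _ _ 1 h1
      _ = (F.erase b).card := by simp
  have hFcard : F.card = q + 1 := repl hD hq hpX
  have hFe : (F.erase b).card = q := by
    rw [Finset.card_erase_of_mem hbF, hFcard]
    simp
  omega

/-- Upper bound: a dominating set of size `2q`. -/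
lemma upper_bound (hD : IsDesign X Bl (q ^ 2 + q + 1) (q + 1) 1) (hq : 2 ≤ q) :
    ∃ P L, IsDomSet X Bl P L ∧ P.card + L.card = 2 * q := by
  have hq1 : 1 ≤ q := by omega
  have hX : 1 < X.card := by rw [hD.card_points]; nlinarith
  obtain ⟨x, hx, y, hy, hxy⟩ := Finset.one_lt_card.mp hX
  obtain ⟨l, hl, hxl, hyl⟩ := exists_block hD hx hy hxy
  have hlX := hD.block_subset l hl
  set P := l.erase x with hP
  set L := (Bl.filter (fun c => x ∈ c)).erase l with hLdef
  have hPcard : P.card = q := by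
    rw [hP, Finset.card_erase_of_mem hxl, hD.block_card l hl]
    simp
  have hLcard : L.card = q := by
    rw [hLdef, Finset.card_erase_of_mem (Finset.mem_filter.2 ⟨hl, hxl⟩), repl hD hq1 hx]
    simp
  refine ⟨P, L, ⟨?_, ?_, ?_, ?_⟩, by omega⟩
  · exact fun z hz => hlX (Finset.mem_of_mem_erase hz)
  · exact fun c hc => (Finset.mem_filter.1 (Finset.mem_of_mem_erase hc)).1
  · intro z hz hzP
    by_cases hzl : z ∈ l
    · have hzx : z = x := by
        by_contra h
        exact hzP (Finset.mem_erase.2 ⟨h, hzl⟩)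
      have hLne : L.Nonempty := by rw [← Finset.card_pos, hLcard]; omega
      obtain ⟨c, hc⟩ := hLne
      have hc' := Finset.mem_of_mem_erase hc
      rw [Finset.mem_filter] at hc'
      exact ⟨c, hc, hzx ▸ hc'.2⟩
    · have hzx : x ≠ z := fun h => hzl (h ▸ hxl)
      obtain ⟨c, hc, hxc, hzc⟩ := exists_block hD hx hz hzx
      refine ⟨c, Finset.mem_erase.2 ⟨fun h => hzl (h ▸ hzc), Finset.mem_filter.2 ⟨hc, hxc⟩⟩, hzc⟩
  · intro c hc hcL
    by_cases hcl : c = l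
    · have hPne : P.Nonempty := by rw [← Finset.card_pos, hPcard]; omega
      obtain ⟨z, hz⟩ := hPne
      exact ⟨z, hz, hcl ▸ Finset.mem_of_mem_erase hz⟩
    · by_cases hxc : x ∈ c
      · exact absurd (Finset.mem_erase.2 ⟨hcl, Finset.mem_filter.2 ⟨hc, hxc⟩⟩) hcL
      · obtain ⟨z, hzl, hzc⟩ := lines_meet hD hq1 hl hc (fun h => hcl h.symm)
        exact ⟨z, Finset.mem_erase.2 ⟨fun h => hxc (h ▸ hzc), hzl⟩, hzc⟩

/-- Lower bound: any dominating set has size at least `2q`. -/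
lemma lower_bound (hD : IsDesign X Bl (q ^ 2 + q + 1) (q + 1) 1) (hq : 2 ≤ q)
    {P : Finset α} {L : Finset (Finset α)} (h : IsDomSet X Bl P L) :
    2 * q ≤ P.card + L.card := by
  have hq1 : 1 ≤ q := by omega
  obtain ⟨hPX, hLB, hdom1, hdom2⟩ := h
  have h1 : q ^ 2 + q + 1 ≤ P.card + L.card * (q + 1) := by
    have hcov : X ⊆ P ∪ L.biUnion id := by
      intro z hz
      by_cases hzP : z ∈ P
      · exact Finset.mem_union_left _ hzP
      · obtain ⟨b, hb, hzb⟩ := hdom1 z hz hzP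
        exact Finset.mem_union_right _ (Finset.mem_biUnion.2 ⟨b, hb, hzb⟩)
    calc q ^ 2 + q + 1 = X.card := hD.card_points.symm
      _ ≤ (P ∪ L.biUnion id).card := Finset.card_le_card hcov
      _ ≤ P.card + (L.biUnion id).card := Finset.card_union_le _ _
      _ ≤ P.card + ∑ b ∈ L, b.card := by
          gcongr
          exact Finset.card_biUnion_le
      _ = P.card + L.card * (q + 1) := by
          congr 1
          rw [Finset.sum_congr rfl (fun b hb => hD.block_card b (hLB hb)),
            Finset.sum_const, smul_eq_mul]
  have h2 : q ^ 2 + q + 1 ≤ L.card + P.card * (q + 1) := by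
    have hcov : Bl ⊆ L ∪ P.biUnion (fun p => Bl.filter (fun b => p ∈ b)) := by
      intro c hc
      by_cases hcL : c ∈ L
      · exact Finset.mem_union_left _ hcL
      · obtain ⟨z, hz, hzc⟩ := hdom2 c hc hcL
        exact Finset.mem_union_right _
          (Finset.mem_biUnion.2 ⟨z, hz, Finset.mem_filter.2 ⟨hc, hzc⟩⟩)
    calc q ^ 2 + q + 1 = Bl.card := (card_blocks hD hq1).symm
      _ ≤ (L ∪ P.biUnion (fun p => Bl.filter (fun b => p ∈ b))).card :=
          Finset.card_le_card hcov
      _ ≤ L.card + (P.biUnion (fun p => Bl.filter (fun b => p ∈ b))).card :=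
          Finset.card_union_le _ _
      _ ≤ L.card + ∑ p ∈ P, (Bl.filter (fun b => p ∈ b)).card := by
          gcongr
          exact Finset.card_biUnion_le
      _ = L.card + P.card * (q + 1) := by
          congr 1
          rw [Finset.sum_congr rfl (fun p hp => repl hD hq1 (hPX hp)),
            Finset.sum_const, smul_eq_mul]
  -- arithmetic
  by_contra hcon
  push_neg at hcon
  set a := P.card
  set b := L.card
  have ha : (q : ℤ) ≤ a := by
    by_contra h'
    push_neg at h'
    have h2' : (q : ℤ) ^ 2 + q + 1 ≤ b + a * (q + 1) := by exact_mod_cast h2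
    have hcon' : (a : ℤ) + b < 2 * q := by exact_mod_cast hcon
    have ha' : (a : ℤ) ≤ q - 1 := by omega
    nlinarith [mul_le_mul_of_nonneg_right ha' (show (0:ℤ) ≤ q + 1 by positivity)]
  have hb : (q : ℤ) ≤ b := by
    by_contra h'
    push_neg at h'
    have h1' : (q : ℤ) ^ 2 + q + 1 ≤ a + b * (q + 1) := by exact_mod_cast h1
    have hcon' : (a : ℤ) + b < 2 * q := by exact_mod_cast hcon
    have hb' : (b : ℤ) ≤ q - 1 := by omega
    nlinarith [mul_le_mul_of_nonneg_right hb' (show (0:ℤ) ≤ q + 1 by positivity)]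
  have hcon' : (a : ℤ) + b < 2 * q := by exact_mod_cast hcon
  omega

end Aux

theorem stmt_6 (X : Finset α) (Bl : Finset (Finset α)) (q : ℕ) (hq : 2 ≤ q)
    (hD : IsDesign X Bl (q ^ 2 + q + 1) (q + 1) 1) :
    gamma X Bl = 2 * q := by
  obtain ⟨P, L, hdom, hcard⟩ := upper_bound hD hq
  have hmem : 2 * q ∈ {n | ∃ P L, IsDomSet X Bl P L ∧ P.card + L.card = n} :=
    ⟨P, L, hdom, hcard⟩
  refine le_antisymm (Nat.sInf_le hmem) (le_csInf ⟨_, hmem⟩ ?_)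
  rintro n ⟨P', L', hdom', rfl⟩
  exact lower_bound hD hq hdom'
end

section
/- Every finite affine plane is super-neat: if D is a 2-(q², q, 1) design with q ≥ 2, then every minimum dominating set S of the incidence graph G_D satisfies S = I_P where P = S ∩ X. -/
open Finset

variable {α : Type*} [DecidableEq α]

lemma point_deg {X : Finset α} {Bl : Finset (Finset α)} {q : ℕ} (hq : 2 ≤ q)
    (hD : IsDesign X Bl (q ^ 2) q 1) {x : α} (hx : x ∈ X) :
    (Bl.filter (fun b => x ∈ b)).card = q + 1 := by
  have key : ∑ y ∈ X.erase x, (Bl.filter (fun b => x ∈ b ∧ y ∈ b)).card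
      = q ^ 2 - 1 := by
    rw [Finset.sum_congr rfl (fun y hy => hD.pair_count x hx y
      (Finset.mem_of_mem_erase hy) (fun h => (Finset.ne_of_mem_erase hy) h.symm))]
    simp [Finset.card_erase_of_mem hx, hD.card_points]
  have inner : ∀ b ∈ Bl, (∑ y ∈ X.erase x, if x ∈ b ∧ y ∈ b then 1 else 0)
      = if x ∈ b then q - 1 else 0 := by
    intro b hb
    by_cases hxb : x ∈ b
    · simp only [hxb, true_and, if_pos]
      rw [← Finset.card_filter]
      have hfe : (X.erase x).filter (fun y => y ∈ b) = b.erase x := by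
        ext y
        simp only [Finset.mem_filter, Finset.mem_erase]
        exact ⟨fun h => ⟨h.1.1, h.2⟩, fun h => ⟨⟨h.1, hD.block_subset b hb h.2⟩, h.2⟩⟩
      rw [hfe, Finset.card_erase_of_mem hxb, hD.block_card b hb]
    · simp [hxb]
  have swap : ∑ y ∈ X.erase x, (Bl.filter (fun b => x ∈ b ∧ y ∈ b)).card
      = (Bl.filter (fun b => x ∈ b)).card * (q - 1) := by
    simp only [Finset.card_filter]
    rw [Finset.sum_comm, Finset.sum_congr rfl inner]
    rw [Finset.sum_ite, Finset.sum_const, Finset.sum_const]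
    simp [mul_comm]
  rw [swap] at key
  have h1 : (q + 1) * (q - 1) + 1 = q ^ 2 := by
    obtain ⟨n, rfl⟩ : ∃ n, q = n + 1 := ⟨q - 1, by omega⟩
    simp only [Nat.add_sub_cancel]
    ring
  have hpos : 0 < q - 1 := by omega
  exact Nat.eq_of_mul_eq_mul_right hpos (key.trans (by omega))

lemma block_count {X : Finset α} {Bl : Finset (Finset α)} {q : ℕ} (hq : 2 ≤ q)
    (hD : IsDesign X Bl (q ^ 2) q 1) : Bl.card = q * (q + 1) := by
  have key : ∑ x ∈ X, (Bl.filter (fun b => x ∈ b)).card = q ^ 2 * (q + 1) := by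
    rw [Finset.sum_congr rfl (fun x hx => point_deg hq hD hx)]
    simp [hD.card_points]
  have swap : ∑ x ∈ X, (Bl.filter (fun b => x ∈ b)).card = Bl.card * q := by
    simp only [Finset.card_filter]
    rw [Finset.sum_comm]
    have inner : ∀ b ∈ Bl, (∑ x ∈ X, if x ∈ b then 1 else 0) = q := by
      intro b hb
      rw [← Finset.card_filter]
      rw [Finset.filter_mem_eq_inter, Finset.inter_eq_right.mpr (hD.block_subset b hb)]
      exact hD.block_card b hb
    rw [Finset.sum_congr rfl inner, Finset.sum_const, smul_eq_mul]
  rw [swap] at key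
  have hpos : 0 < q := by omega
  apply Nat.eq_of_mul_eq_mul_right hpos
  rw [key]; ring

lemma inter_card_le {X : Finset α} {Bl : Finset (Finset α)} {q : ℕ} (hq : 2 ≤ q)
    (hD : IsDesign X Bl (q ^ 2) q 1) {b b' : Finset α} (hb : b ∈ Bl) (hb' : b' ∈ Bl)
    (hne : b ≠ b') : (b ∩ b').card ≤ 1 := by
  by_contra h
  push_neg at h
  obtain ⟨y, hy, z, hz, hyz⟩ := Finset.one_lt_card.mp h
  have hyX : y ∈ X := hD.block_subset b hb (Finset.mem_inter.mp hy).1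
  have hzX : z ∈ X := hD.block_subset b hb (Finset.mem_inter.mp hz).1
  have hpc := hD.pair_count y hyX z hzX hyz
  have hsub : ({b, b'} : Finset (Finset α)) ⊆ Bl.filter (fun c => y ∈ c ∧ z ∈ c) := by
    intro c hc
    rcases Finset.mem_insert.mp hc with rfl | hc
    · exact Finset.mem_filter.mpr ⟨hb, (Finset.mem_inter.mp hy).1, (Finset.mem_inter.mp hz).1⟩
    · rw [Finset.mem_singleton] at hc; subst hc
      exact Finset.mem_filter.mpr ⟨hb', (Finset.mem_inter.mp hy).2, (Finset.mem_inter.mp hz).2⟩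
  have := Finset.card_le_card hsub
  rw [Finset.card_pair hne, hpc] at this
  omega

lemma parallel_unique {X : Finset α} {Bl : Finset (Finset α)} {q : ℕ} (hq : 2 ≤ q)
    (hD : IsDesign X Bl (q ^ 2) q 1) {b : Finset α} (hb : b ∈ Bl) {x : α}
    (hx : x ∈ X) (hxb : x ∉ b) :
    (Bl.filter (fun b' => x ∈ b' ∧ b' ∩ b = ∅)).card = 1 := by
  have key : ∑ y ∈ b, (Bl.filter (fun c => x ∈ c ∧ y ∈ c)).card = q := by
    rw [Finset.sum_congr rfl (fun y hy => hD.pair_count x hx y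
      (hD.block_subset b hb hy) (fun h => hxb (by rw [h]; exact hy)))]
    simp [hD.block_card b hb]
  have swap : ∑ y ∈ b, (Bl.filter (fun c => x ∈ c ∧ y ∈ c)).card
      = (Bl.filter (fun b' => x ∈ b' ∧ (b' ∩ b).Nonempty)).card := by
    simp only [Finset.card_filter]
    rw [Finset.sum_comm]
    apply Finset.sum_congr rfl
    intro b' hb'
    by_cases hxb' : x ∈ b'
    · have hne : b' ≠ b := fun h => hxb (h ▸ hxb')
      have hle := inter_card_le hq hD hb' hb hne
      simp only [hxb', true_and]
      rw [← Finset.card_filter]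
      have hfe : b.filter (fun y => y ∈ b') = b' ∩ b := by
        ext y; simp only [Finset.mem_filter, Finset.mem_inter]; tauto
      rw [hfe]
      by_cases hne' : (b' ∩ b).Nonempty
      · rw [if_pos hne']
        have := Finset.card_pos.mpr hne'
        omega
      · rw [if_neg hne', Finset.not_nonempty_iff_eq_empty.mp hne']
        simp
    · simp [hxb']
  have hmeets : (Bl.filter (fun b' => x ∈ b' ∧ (b' ∩ b).Nonempty)).card = q := by
    rw [← swap, key]
  have hdeg := point_deg hq hD hx
  have hsplit := Finset.card_filter_add_card_filter_not
    (s := Bl.filter (fun b' => x ∈ b')) (p := fun b' => b' ∩ b = ∅)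
  rw [Finset.filter_filter, Finset.filter_filter] at hsplit
  have he1 : Bl.filter (fun b' => x ∈ b' ∧ ¬ b' ∩ b = ∅)
      = Bl.filter (fun b' => x ∈ b' ∧ (b' ∩ b).Nonempty) := by
    apply Finset.filter_congr
    intro b' _
    simp [Finset.nonempty_iff_ne_empty]
  rw [he1, hmeets, hdeg] at hsplit
  omega

lemma parallel_class_card {X : Finset α} {Bl : Finset (Finset α)} {q : ℕ} (hq : 2 ≤ q)
    (hD : IsDesign X Bl (q ^ 2) q 1) {b₀ : Finset α} (hb₀ : b₀ ∈ Bl) :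
    (Bl.filter (fun b => b ∩ b₀ = ∅)).card = q - 1 := by
  have key : ∑ x ∈ X \ b₀, (Bl.filter (fun b' => x ∈ b' ∧ b' ∩ b₀ = ∅)).card
      = q ^ 2 - q := by
    rw [Finset.sum_congr rfl (fun x hxm => parallel_unique hq hD hb₀
      (Finset.mem_sdiff.mp hxm).1 (Finset.mem_sdiff.mp hxm).2)]
    rw [Finset.sum_const, smul_eq_mul, mul_one,
      Finset.card_sdiff_of_subset (hD.block_subset b₀ hb₀), hD.card_points, hD.block_card b₀ hb₀]
  have swap : ∑ x ∈ X \ b₀, (Bl.filter (fun b' => x ∈ b' ∧ b' ∩ b₀ = ∅)).card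
      = (Bl.filter (fun b => b ∩ b₀ = ∅)).card * q := by
    simp only [Finset.card_filter]
    rw [Finset.sum_comm]
    have inner : ∀ b' ∈ Bl, (∑ x ∈ X \ b₀, if x ∈ b' ∧ b' ∩ b₀ = ∅ then 1 else 0)
        = if b' ∩ b₀ = ∅ then q else 0 := by
      intro b' hb'
      by_cases hd : b' ∩ b₀ = ∅
      · simp only [hd, and_true, if_pos]
        rw [← Finset.card_filter]
        have hfe : (X \ b₀).filter (fun x => x ∈ b') = b' := by
          ext y
          simp only [Finset.mem_filter, Finset.mem_sdiff]
          constructor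
          · exact fun h => h.2
          · intro h
            refine ⟨⟨hD.block_subset b' hb' h, fun hy => ?_⟩, h⟩
            have : y ∈ b' ∩ b₀ := Finset.mem_inter.mpr ⟨h, hy⟩
            rw [hd] at this
            exact absurd this (Finset.notMem_empty y)
        rw [hfe, hD.block_card b' hb']
      · simp [hd]
    rw [Finset.sum_congr rfl inner, Finset.sum_ite, Finset.sum_const, Finset.sum_const]
    simp [mul_comm]
  rw [swap] at key
  have hpos : 0 < q := by omega
  apply Nat.eq_of_mul_eq_mul_right hpos
  rw [key, pow_two, Nat.sub_mul, one_mul]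

lemma gamma_le {X : Finset α} {Bl : Finset (Finset α)} {q : ℕ} (hq : 2 ≤ q)
    (hD : IsDesign X Bl (q ^ 2) q 1) : gamma X Bl ≤ 2 * q - 1 := by
  obtain ⟨x, hx, y, hy, hxy⟩ := Finset.one_lt_card.mp
    (show 1 < X.card by rw [hD.card_points]; nlinarith)
  have hpc := hD.pair_count x hx y hy hxy
  obtain ⟨b₀, hb₀f⟩ := Finset.card_pos.mp (show 0 < _ from hpc ▸ Nat.one_pos)
  have hb₀ : b₀ ∈ Bl := (Finset.mem_filter.mp hb₀f).1
  apply Nat.sInf_le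
  refine ⟨b₀, Bl.filter (fun b => b ∩ b₀ = ∅),
    ⟨hD.block_subset b₀ hb₀, Finset.filter_subset _ _, ?_, ?_⟩, ?_⟩
  · intro z hzX hzb₀
    have hcard := parallel_unique hq hD hb₀ hzX hzb₀
    obtain ⟨b', hb'⟩ := Finset.card_pos.mp (hcard ▸ Nat.one_pos)
    have h' := Finset.mem_filter.mp hb'
    exact ⟨b', Finset.mem_filter.mpr ⟨h'.1, h'.2.2⟩, h'.2.1⟩
  · intro b hbB hbL
    have hne : ¬ (b ∩ b₀ = ∅) := fun h => hbL (Finset.mem_filter.mpr ⟨hbB, h⟩)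
    obtain ⟨z, hz⟩ := Finset.nonempty_iff_ne_empty.mpr hne
    have hz' := Finset.mem_inter.mp hz
    exact ⟨z, hz'.2, hz'.1⟩
  · rw [hD.block_card b₀ hb₀, parallel_class_card hq hD hb₀]
    omega

theorem stmt_15 (X : Finset α) (Bl : Finset (Finset α)) (q : ℕ) (hq : 2 ≤ q)
    (hD : IsDesign X Bl (q ^ 2) q 1) :
    ∀ P L, IsDomSet X Bl P L → P.card + L.card = gamma X Bl →
      L = Bl.filter (fun b => b ∩ P = ∅) := by
  intro P L hdom hmin
  obtain ⟨hPX, hLB, hdom3, hdom4⟩ := hdom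
  set n := P.card with hn
  set m := L.card with hm
  -- total size bound
  have hnm : n + m ≤ 2 * q - 1 := hmin ▸ gamma_le hq hD
  -- inequality (a): points covered
  have ha : q ^ 2 ≤ n + q * m := by
    have hXsub : X ⊆ P ∪ L.biUnion id := by
      intro x hxX
      by_cases hxP : x ∈ P
      · exact Finset.mem_union_left _ hxP
      · obtain ⟨b, hbL, hxb⟩ := hdom3 x hxX hxP
        exact Finset.mem_union_right _ (Finset.mem_biUnion.mpr ⟨b, hbL, hxb⟩)
    have h1 : X.card ≤ P.card + (L.biUnion id).card :=
      le_trans (Finset.card_le_card hXsub) (Finset.card_union_le _ _)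
    have h2 : (L.biUnion id).card ≤ q * m := by
      calc (L.biUnion id).card ≤ ∑ b ∈ L, b.card := Finset.card_biUnion_le
        _ = ∑ b ∈ L, q := Finset.sum_congr rfl (fun b hb => hD.block_card b (hLB hb))
        _ = q * m := by rw [Finset.sum_const, smul_eq_mul, mul_comm]
    rw [hD.card_points] at h1
    omega
  -- inequality (b): blocks covered
  have hb : q ^ 2 + q ≤ m + n + n * q := by
    have hBsub : Bl ⊆ L ∪ P.biUnion (fun p => Bl.filter (fun b => p ∈ b)) := by
      intro b hbB
      by_cases hbL : b ∈ L
      · exact Finset.mem_union_left _ hbL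
      · obtain ⟨p, hpP, hpb⟩ := hdom4 b hbB hbL
        exact Finset.mem_union_right _ (Finset.mem_biUnion.mpr
          ⟨p, hpP, Finset.mem_filter.mpr ⟨hbB, hpb⟩⟩)
    have h1 : Bl.card ≤ m + (P.biUnion (fun p => Bl.filter (fun b => p ∈ b))).card :=
      le_trans (Finset.card_le_card hBsub) (Finset.card_union_le _ _)
    have h2 : (P.biUnion (fun p => Bl.filter (fun b => p ∈ b))).card ≤ n * (q + 1) := by
      calc _ ≤ ∑ p ∈ P, (Bl.filter (fun b => p ∈ b)).card := Finset.card_biUnion_le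
        _ = ∑ p ∈ P, (q + 1) := Finset.sum_congr rfl
            (fun p hp => point_deg hq hD (hPX hp))
        _ = n * (q + 1) := by rw [Finset.sum_const, smul_eq_mul]
    have h3 := block_count hq hD
    nlinarith
  -- pin down n = q, m = q - 1
  have hnm' : n + m + 1 ≤ 2 * q := by omega
  have hsq : q ^ 2 = q * q := pow_two q
  have hnq : q ≤ n := by
    rcases Nat.lt_or_ge n q with h | h
    · exfalso
      have hmul : (n + 1) * q ≤ q * q := Nat.mul_le_mul_right q h
      rw [add_mul, one_mul] at hmul
      rw [hsq] at hb
      linarith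
    · exact h
  have hmq : q ≤ m + 1 := by
    rcases Nat.lt_or_ge (m + 1) q with h | h
    · exfalso
      have hmul : (m + 2) * q ≤ q * q := Nat.mul_le_mul_right q h
      rw [add_mul] at hmul
      rw [hsq] at ha
      linarith
    · exact h
  have hneq : n = q := by omega
  have hmeq : m = q - 1 := by omega
  -- equality analysis: the blocks of L exactly cover X \ P
  have hU : L.biUnion id = X \ P := by
    symm
    apply Finset.eq_of_subset_of_card_le
    · intro x hxm
      have hx := Finset.mem_sdiff.mp hxm
      obtain ⟨b, hbL, hxb⟩ := hdom3 x hx.1 hx.2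
      exact Finset.mem_biUnion.mpr ⟨b, hbL, hxb⟩
    · have h2 : (L.biUnion id).card ≤ q * m := by
        calc (L.biUnion id).card ≤ ∑ b ∈ L, b.card := Finset.card_biUnion_le
          _ = ∑ b ∈ L, q := Finset.sum_congr rfl (fun b hb => hD.block_card b (hLB hb))
          _ = q * m := by rw [Finset.sum_const, smul_eq_mul, mul_comm]
      have h3 : (X \ P).card = q ^ 2 - q := by
        rw [Finset.card_sdiff_of_subset hPX, hD.card_points, ← hn, hneq]
      rw [h3]
      have hqm : q * m + q = q ^ 2 := by
        rw [hmeq, pow_two]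
        obtain ⟨r, rfl⟩ : ∃ r, q = r + 1 := ⟨q - 1, by omega⟩
        simp only [Nat.add_sub_cancel]
        ring
      omega
  -- every block of L is disjoint from P
  apply Finset.Subset.antisymm
  · intro b hbL
    refine Finset.mem_filter.mpr ⟨hLB hbL, ?_⟩
    rw [Finset.eq_empty_iff_forall_notMem]
    intro y hy
    have hy' := Finset.mem_inter.mp hy
    have hyU : y ∈ L.biUnion id := Finset.mem_biUnion.mpr ⟨b, hbL, hy'.1⟩
    rw [hU] at hyU
    exact (Finset.mem_sdiff.mp hyU).2 hy'.2
  · intro b hbf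
    have h := Finset.mem_filter.mp hbf
    by_contra hbL
    obtain ⟨z, hzP, hzb⟩ := hdom4 b h.1 hbL
    have : z ∈ b ∩ P := Finset.mem_inter.mpr ⟨hzb, hzP⟩
    rw [h.2] at this
    exact absurd this (Finset.notMem_empty z)
end
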